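/- Fix λ ∈ [0,1] and c₁, c₂, c₃ ∈ [−1,1], set g = √(1−λ²), and let ρ = (1/4)(I₄ + c₁·σ₁⊗σ₁ + c₂·σ₂⊗σ₂ + c₃·σ₃⊗σ₃). For φ ∈ ℝ let ψ(φ) = ψ(π/2,φ), ψ⊥(φ) = ψ⊥(π/2,φ) be the equatorial basis, and let Q₊(φ) = √((1+λ)/2)·ψ(φ)ψ(φ)† + √((1−λ)/2)·ψ⊥(φ)ψ⊥(φ)† and Q₋(φ) = √((1+λ)/2)·ψ⊥(φ)ψ⊥(φ)† + √((1−λ)/2)·ψ(φ)ψ(φ)†. Then the non-selective Lüders update averaged over the equatorial circle satisfies (1/(2π))·∫₀^{2π} [(I₂⊗Q₊(φ))ρ(I₂⊗Q₊(φ)) + (I₂⊗Q₋(φ))ρ(I₂⊗Q₋(φ))] dφ = (1/4)(I₄ + ((1+g)/2)·c₁·σ₁⊗σ₁ + ((1+g)/2)·c₂·σ₂⊗σ₂ + g·c₃·σ₃⊗σ₃). -/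

import Mathlib

/-!
Write σ(θ) = cos θ σ₁ + sin θ σ₂. On the equator ψψ† = (1 + σ(φ))/2 and ψ⊥ψ⊥† = (1 − σ(φ))/2,
so Q± = α ± β σ(φ) with α, β = (√((1+λ)/2) ± √((1−λ)/2))/2, and the Lüders sum collapses to
2α² ρ + 2β² (I ⊗ σ(φ)) ρ (I ⊗ σ(φ)), where 2α² = (1+g)/2 and 2β² = (1−g)/2.
Conjugation by the reflection σ(φ) negates σ₃ and sends σ₁, σ₂ to σ(2φ), σ(2φ − π/2),
whose entries are the Fourier modes e^{±2iφ}; these average to zero over the circle.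
-/

open Matrix
open Kronecker

noncomputable section

/-- The equatorial qubit state ψ(π/2,φ). -/
def psiEq (φ : ℝ) : Fin 2 → ℂ :=
  ![(Real.cos (Real.pi/4) : ℂ), Complex.exp (φ * Complex.I) * (Real.sin (Real.pi/4) : ℂ)]

/-- The equatorial qubit state ψ⊥(π/2,φ). -/
def psiPerpEq (φ : ℝ) : Fin 2 → ℂ :=
  ![-(Real.sin (Real.pi/4) : ℂ), Complex.exp (φ * Complex.I) * (Real.cos (Real.pi/4) : ℂ)]

/-- The rank-one matrix u u†. -/
def dyad (u : Fin 2 → ℂ) : Matrix (Fin 2) (Fin 2) ℂ :=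
  Matrix.of fun i j => u i * (starRingEnd ℂ) (u j)

/-- The first Pauli matrix. -/
def sigma1 : Matrix (Fin 2) (Fin 2) ℂ := !![0, 1; 1, 0]

/-- The second Pauli matrix. -/
def sigma2 : Matrix (Fin 2) (Fin 2) ℂ := !![0, -Complex.I; Complex.I, 0]

/-- The third Pauli matrix. -/
def sigma3 : Matrix (Fin 2) (Fin 2) ℂ := !![1, 0; 0, -1]

/-- The Bell-diagonal state with correlation coefficients c₁, c₂, c₃. -/
def bellDiag (c₁ c₂ c₃ : ℝ) : Matrix (Fin 2 × Fin 2) (Fin 2 × Fin 2) ℂ :=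
  ((1/4 : ℝ) : ℂ) • ((1 : Matrix (Fin 2 × Fin 2) (Fin 2 × Fin 2) ℂ)
    + (c₁ : ℂ) • (sigma1 ⊗ₖ sigma1) + (c₂ : ℂ) • (sigma2 ⊗ₖ sigma2)
    + (c₃ : ℂ) • (sigma3 ⊗ₖ sigma3))

/-- Square root of the unsharp effect operator E₊(φ) on the equatorial basis. -/
def sqrtEffPlus (l φ : ℝ) : Matrix (Fin 2) (Fin 2) ℂ :=
  (Real.sqrt ((1+l)/2) : ℂ) • dyad (psiEq φ) + (Real.sqrt ((1-l)/2) : ℂ) • dyad (psiPerpEq φ)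

/-- Square root of the unsharp effect operator E₋(φ) on the equatorial basis. -/
def sqrtEffMinus (l φ : ℝ) : Matrix (Fin 2) (Fin 2) ℂ :=
  (Real.sqrt ((1+l)/2) : ℂ) • dyad (psiPerpEq φ) + (Real.sqrt ((1-l)/2) : ℂ) • dyad (psiEq φ)

/-- The non-selective Lüders update of the Bell-diagonal state. -/
def luders (l c₁ c₂ c₃ φ : ℝ) : Matrix (Fin 2 × Fin 2) (Fin 2 × Fin 2) ℂ :=
  ((1 : Matrix (Fin 2) (Fin 2) ℂ) ⊗ₖ sqrtEffPlus l φ) * bellDiag c₁ c₂ c₃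
      * ((1 : Matrix (Fin 2) (Fin 2) ℂ) ⊗ₖ sqrtEffPlus l φ)
    + ((1 : Matrix (Fin 2) (Fin 2) ℂ) ⊗ₖ sqrtEffMinus l φ) * bellDiag c₁ c₂ c₃
      * ((1 : Matrix (Fin 2) (Fin 2) ℂ) ⊗ₖ sqrtEffMinus l φ)

lemma two_outcome_sandwich_sum {S R : Type*} [Field S] [CharZero S] [Ring R] [Algebra S R]
    (a b : S) (A N : R) :
    let P : R := (1 / 2 : S) • (1 + N)
    let P' : R := (1 / 2 : S) • (1 - N)
    (a • P + b • P') * A * (a • P + b • P') + (a • P' + b • P) * A * (a • P' + b • P)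
      = ((a + b) ^ 2 / 2) • A + ((a - b) ^ 2 / 2) • (N * A * N) := by
  intro P P'
  simp only [P, P', add_mul, mul_add, sub_mul, mul_sub, smul_mul_assoc, mul_smul_comm,
    smul_smul, one_mul, mul_one, mul_assoc, smul_add, smul_sub]
  module

lemma sqrt_half_one_add_mul_sqrt_half_one_sub {l : ℝ} (h₀ : -1 ≤ l) :
    √((1 + l) / 2) * √((1 - l) / 2) = √(1 - l ^ 2) / 2 := by
  rw [← Real.sqrt_mul (by linarith),
    show (1 + l) / 2 * ((1 - l) / 2) = (1 - l ^ 2) / 2 ^ 2 by ring,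
    Real.sqrt_div' _ (by positivity), Real.sqrt_sq zero_le_two]

lemma sqrt_half_add_sqrt_half_sq_div_two {l : ℝ} (h₀ : -1 ≤ l) (h₁ : l ≤ 1) :
    (√((1 + l) / 2) + √((1 - l) / 2)) ^ 2 / 2 = (1 + √(1 - l ^ 2)) / 2 := by
  rw [add_sq, mul_assoc, sqrt_half_one_add_mul_sqrt_half_one_sub h₀,
    Real.sq_sqrt (by linarith), Real.sq_sqrt (by linarith)]
  ring

lemma sqrt_half_sub_sqrt_half_sq_div_two {l : ℝ} (h₀ : -1 ≤ l) (h₁ : l ≤ 1) :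
    (√((1 + l) / 2) - √((1 - l) / 2)) ^ 2 / 2 = (1 - √(1 - l ^ 2)) / 2 := by
  rw [sub_sq, mul_assoc, sqrt_half_one_add_mul_sqrt_half_one_sub h₀,
    Real.sq_sqrt (by linarith), Real.sq_sqrt (by linarith)]
  ring

lemma integral_exp_add_int_mul_I (β : ℂ) {k : ℤ} (hk : k ≠ 0) :
    ∫ φ in (0 : ℝ)..(2 * Real.pi), Complex.exp (β + k * φ * Complex.I) = 0 := by
  have hkI : (k * Complex.I : ℂ) ≠ 0 := mul_ne_zero (by exact_mod_cast hk) Complex.I_ne_zero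
  have hperiod : Complex.exp (k * Complex.I * (2 * Real.pi : ℝ)) = 1 := by
    rw [← Complex.exp_int_mul_two_pi_mul_I k]; push_cast; ring_nf
  simp_rw [Complex.exp_add, mul_right_comm _ _ Complex.I]
  rw [intervalIntegral.integral_const_mul, integral_exp_mul_complex hkI, hperiod]
  simp

-- σ(θ) = cos θ • σ₁ + sin θ • σ₂.
def pauliEq (θ : ℝ) : Matrix (Fin 2) (Fin 2) ℂ :=
  !![0, Complex.exp (-(θ * Complex.I)); Complex.exp (θ * Complex.I), 0]

lemma pauliEq_zero : pauliEq 0 = sigma1 := by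
  ext i j; fin_cases i <;> fin_cases j <;> simp [pauliEq, sigma1]

lemma pauliEq_pi_div_two : pauliEq (Real.pi / 2) = sigma2 := by
  ext i j; fin_cases i <;> fin_cases j <;> simp [pauliEq, sigma2, Complex.exp_neg]

lemma pauliEq_mul_self (θ : ℝ) : pauliEq θ * pauliEq θ = 1 := by
  ext i j; fin_cases i <;> fin_cases j <;>
    simp [pauliEq, Matrix.mul_apply, ← Complex.exp_add]

lemma pauliEq_mul_pauliEq_mul_pauliEq (θ α : ℝ) :
    pauliEq θ * pauliEq α * pauliEq θ = pauliEq (2 * θ - α) := by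
  ext i j; fin_cases i <;> fin_cases j <;>
    simp [pauliEq, Matrix.mul_apply, ← Complex.exp_add] <;> ring_nf

lemma pauliEq_mul_sigma3_mul_pauliEq (θ : ℝ) : pauliEq θ * sigma3 * pauliEq θ = -sigma3 := by
  ext i j; fin_cases i <;> fin_cases j <;>
    simp [pauliEq, sigma3, Matrix.mul_apply, ← Complex.exp_add]

lemma dyad_psiEq (φ : ℝ) : dyad (psiEq φ) = (1 / 2 : ℂ) • (1 + pauliEq φ) := by
  have h2 : ((√2 : ℝ) : ℂ) ^ 2 = 2 := by norm_cast; simp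
  ext i j; fin_cases i <;> fin_cases j <;>
    simp [dyad, psiEq, pauliEq, Real.cos_pi_div_four, Real.sin_pi_div_four, ← Complex.exp_conj,
      Complex.conj_ofReal, map_ofNat] <;>
    ring_nf <;> simp only [h2, Complex.exp_neg] <;> field_simp <;> ring

lemma dyad_psiPerpEq (φ : ℝ) : dyad (psiPerpEq φ) = (1 / 2 : ℂ) • (1 - pauliEq φ) := by
  have h2 : ((√2 : ℝ) : ℂ) ^ 2 = 2 := by norm_cast; simp
  ext i j; fin_cases i <;> fin_cases j <;>
    simp [dyad, psiPerpEq, pauliEq, Real.cos_pi_div_four, Real.sin_pi_div_four, ← Complex.exp_conj,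
      Complex.conj_ofReal, map_ofNat] <;>
    ring_nf <;> simp only [h2, Complex.exp_neg] <;> field_simp <;> ring

lemma one_kronecker_pauliEq_conj_bellDiag (c₁ c₂ c₃ θ : ℝ) :
    (1 ⊗ₖ pauliEq θ) * bellDiag c₁ c₂ c₃ * (1 ⊗ₖ pauliEq θ)
      = ((1 / 4 : ℝ) : ℂ) • (1 + (c₁ : ℂ) • (sigma1 ⊗ₖ pauliEq (2 * θ))
          + (c₂ : ℂ) • (sigma2 ⊗ₖ pauliEq (2 * θ - Real.pi / 2))
          - (c₃ : ℂ) • (sigma3 ⊗ₖ sigma3)) := by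
  have conj_kronecker : ∀ A B : Matrix (Fin 2) (Fin 2) ℂ,
      (1 ⊗ₖ pauliEq θ) * (A ⊗ₖ B) * (1 ⊗ₖ pauliEq θ) = A ⊗ₖ (pauliEq θ * B * pauliEq θ) := by
    intro A B
    rw [← mul_kronecker_mul, ← mul_kronecker_mul, one_mul, mul_one]
  have conj_one : (1 ⊗ₖ pauliEq θ) * 1 * (1 ⊗ₖ pauliEq θ)
      = (1 : Matrix (Fin 2 × Fin 2) (Fin 2 × Fin 2) ℂ) := by
    rw [← one_kronecker_one, conj_kronecker, mul_one, pauliEq_mul_self]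
  simp only [bellDiag, mul_smul_comm, smul_mul_assoc, mul_add, add_mul, conj_one, conj_kronecker]
  rw [← pauliEq_zero, ← pauliEq_pi_div_two, pauliEq_mul_pauliEq_mul_pauliEq,
    pauliEq_mul_pauliEq_mul_pauliEq, sub_zero,
    pauliEq_mul_sigma3_mul_pauliEq, ← neg_one_smul ℂ sigma3, kronecker_smul]
  module

lemma luders_eq {l : ℝ} (h₀ : -1 ≤ l) (h₁ : l ≤ 1) (c₁ c₂ c₃ φ : ℝ) :
    luders l c₁ c₂ c₃ φ
      = bellDiag ((1 + √(1 - l ^ 2)) / 2 * c₁) ((1 + √(1 - l ^ 2)) / 2 * c₂) (√(1 - l ^ 2) * c₃)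
        + (((1 - √(1 - l ^ 2)) / 8 : ℝ) : ℂ) • ((c₁ : ℂ) • (sigma1 ⊗ₖ pauliEq (2 * φ))
          + (c₂ : ℂ) • (sigma2 ⊗ₖ pauliEq (2 * φ - Real.pi / 2))) := by
  set I₂ : Matrix (Fin 2) (Fin 2) ℂ := 1
  set N := I₂ ⊗ₖ pauliEq φ
  have one_kronecker_dyad_psiEq : I₂ ⊗ₖ dyad (psiEq φ) = (1 / 2 : ℂ) • (1 + N) := by
    rw [dyad_psiEq, kronecker_smul, kronecker_add, one_kronecker_one]
  have one_kronecker_dyad_psiPerpEq : I₂ ⊗ₖ dyad (psiPerpEq φ) = (1 / 2 : ℂ) • (1 - N) := by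
    rw [dyad_psiPerpEq, sub_eq_add_neg, ← neg_one_smul ℂ (pauliEq φ), kronecker_smul,
      kronecker_add, kronecker_smul, one_kronecker_one, neg_one_smul, ← sub_eq_add_neg]
  have hplus : I₂ ⊗ₖ sqrtEffPlus l φ = ((√((1 + l) / 2) : ℝ) : ℂ) • (I₂ ⊗ₖ dyad (psiEq φ))
      + ((√((1 - l) / 2) : ℝ) : ℂ) • (I₂ ⊗ₖ dyad (psiPerpEq φ)) := by
    rw [sqrtEffPlus, kronecker_add, kronecker_smul, kronecker_smul]
  have hminus : I₂ ⊗ₖ sqrtEffMinus l φ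
      = ((√((1 + l) / 2) : ℝ) : ℂ) • (I₂ ⊗ₖ dyad (psiPerpEq φ))
      + ((√((1 - l) / 2) : ℝ) : ℂ) • (I₂ ⊗ₖ dyad (psiEq φ)) := by
    rw [sqrtEffMinus, kronecker_add, kronecker_smul, kronecker_smul]
  have hsum : (((√((1 + l) / 2) : ℝ) : ℂ) + ((√((1 - l) / 2) : ℝ) : ℂ)) ^ 2 / 2
      = (((1 + √(1 - l ^ 2)) / 2 : ℝ) : ℂ) := by
    rw [← sqrt_half_add_sqrt_half_sq_div_two h₀ h₁]; push_cast; rfl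
  have hdiff : (((√((1 + l) / 2) : ℝ) : ℂ) - ((√((1 - l) / 2) : ℝ) : ℂ)) ^ 2 / 2
      = (((1 - √(1 - l ^ 2)) / 2 : ℝ) : ℂ) := by
    rw [← sqrt_half_sub_sqrt_half_sq_div_two h₀ h₁]; push_cast; rfl
  rw [luders, hplus, hminus, one_kronecker_dyad_psiEq, one_kronecker_dyad_psiPerpEq,
    two_outcome_sandwich_sum, hsum, hdiff, one_kronecker_pauliEq_conj_bellDiag,
    bellDiag, bellDiag]
  push_cast
  module

lemma continuous_pauliEq_apply (i j : Fin 2) : Continuous fun θ => pauliEq θ i j := by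
  fin_cases i <;> fin_cases j <;> simp [pauliEq] <;> fun_prop

lemma integral_pauliEq_two_mul_sub_apply (α : ℝ) (i j : Fin 2) :
    ∫ φ in (0 : ℝ)..(2 * Real.pi), pauliEq (2 * φ - α) i j = 0 := by
  fin_cases i <;> fin_cases j <;> simp only [pauliEq] <;> simp
  · convert integral_exp_add_int_mul_I (α * Complex.I) (k := -2) (by norm_num) using 4
    push_cast; ring
  · convert integral_exp_add_int_mul_I (-(α * Complex.I)) (k := 2) (by norm_num) using 4
    push_cast; ring

lemma intervalIntegrable_kronecker_pauliEq_apply (A : Matrix (Fin 2) (Fin 2) ℂ) (α : ℝ)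
    (p q : Fin 2 × Fin 2) (a b : ℝ) :
    IntervalIntegrable (fun φ : ℝ => (A ⊗ₖ pauliEq (2 * φ - α)) p q) MeasureTheory.volume a b := by
  simp only [kroneckerMap_apply]
  exact (continuous_const.mul ((continuous_pauliEq_apply _ _).comp (by fun_prop)))
    |>.intervalIntegrable _ _

lemma integral_kronecker_pauliEq_apply (A : Matrix (Fin 2) (Fin 2) ℂ) (α : ℝ)
    (p q : Fin 2 × Fin 2) :
    ∫ φ in (0 : ℝ)..(2 * Real.pi), (A ⊗ₖ pauliEq (2 * φ - α)) p q = 0 := by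
  simp only [kroneckerMap_apply, intervalIntegral.integral_const_mul,
    integral_pauliEq_two_mul_sub_apply, mul_zero]

lemma integral_luders_apply {l : ℝ} (h₀ : -1 ≤ l) (h₁ : l ≤ 1) (c₁ c₂ c₃ : ℝ)
    (p q : Fin 2 × Fin 2) :
    ∫ φ in (0 : ℝ)..(2 * Real.pi), luders l c₁ c₂ c₃ φ p q
      = (2 * Real.pi : ℂ) * bellDiag ((1 + √(1 - l ^ 2)) / 2 * c₁) ((1 + √(1 - l ^ 2)) / 2 * c₂)
          (√(1 - l ^ 2) * c₃) p q := by
  have hσ₁ := integral_kronecker_pauliEq_apply sigma1 0 p q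
  have hσ₂ := integral_kronecker_pauliEq_apply sigma2 (Real.pi / 2) p q
  have iσ₁ := intervalIntegrable_kronecker_pauliEq_apply sigma1 0 p q 0 (2 * Real.pi)
  have iσ₂ := intervalIntegrable_kronecker_pauliEq_apply sigma2 (Real.pi / 2) p q 0 (2 * Real.pi)
  simp only [sub_zero] at hσ₁ iσ₁
  simp only [luders_eq h₀ h₁, Matrix.add_apply, Matrix.smul_apply, smul_eq_mul]
  rw [intervalIntegral.integral_add intervalIntegrable_const
      (((iσ₁.const_mul _).add (iσ₂.const_mul _)).const_mul _),
    intervalIntegral.integral_const_mul,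
    intervalIntegral.integral_add (iσ₁.const_mul _) (iσ₂.const_mul _),
    intervalIntegral.integral_const_mul, intervalIntegral.integral_const_mul, hσ₁, hσ₂,
    intervalIntegral.integral_const, sub_zero, Complex.real_smul]
  push_cast
  ring

theorem averaged_luders_update_general (l c₁ c₂ c₃ : ℝ) (hl : l ∈ Set.Icc (0:ℝ) 1) :
    ∀ p q : Fin 2 × Fin 2,
      ((1 / (2 * Real.pi) : ℝ) : ℂ)
          * ∫ φ in (0:ℝ)..(2 * Real.pi), luders l c₁ c₂ c₃ φ p q
        = bellDiag (((1 + Real.sqrt (1 - l^2))/2) * c₁)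
            (((1 + Real.sqrt (1 - l^2))/2) * c₂)
            (Real.sqrt (1 - l^2) * c₃) p q := by
  intro p q
  have hπ : (Real.pi : ℂ) ≠ 0 := by exact_mod_cast Real.pi_ne_zero
  rw [integral_luders_apply (by linarith [hl.1]) hl.2]
  push_cast
  field_simp

theorem averaged_luders_update (l c₁ c₂ c₃ : ℝ) (hl : l ∈ Set.Icc (0:ℝ) 1)
    (hc₁ : c₁ ∈ Set.Icc (-1:ℝ) 1) (hc₂ : c₂ ∈ Set.Icc (-1:ℝ) 1)
    (hc₃ : c₃ ∈ Set.Icc (-1:ℝ) 1) :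
    ∀ p q : Fin 2 × Fin 2,
      ((1 / (2 * Real.pi) : ℝ) : ℂ)
          * ∫ φ in (0:ℝ)..(2 * Real.pi), luders l c₁ c₂ c₃ φ p q
        = bellDiag (((1 + Real.sqrt (1 - l^2))/2) * c₁)
            (((1 + Real.sqrt (1 - l^2))/2) * c₂)
            (Real.sqrt (1 - l^2) * c₃) p q :=
  averaged_luders_update_general l c₁ c₂ c₃ hl

end
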